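/- For each n ≥ 1, Σ_{λ ⊢ n} (f^λ)² = n!, where the sum is over all Young diagrams λ with n boxes and f^λ is the number of standard Young tableaux of shape λ. -/

import Mathlib

open Nat

structure SYT (μ : YoungDiagram) where
  entry : ℕ → ℕ → ℕ
  mem_iff : ∀ i j, (i, j) ∈ μ ↔ 1 ≤ entry i j
  le_card : ∀ i j, entry i j ≤ μ.card
  injOn : ∀ i j i' j', (i, j) ∈ μ → (i', j') ∈ μ → entry i j = entry i' j' →
    (i, j) = (i', j')
  row_lt : ∀ i j, (i, j + 1) ∈ μ → entry i j < entry i (j + 1)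
  col_lt : ∀ i j, (i + 1, j) ∈ μ → entry i j < entry (i + 1) j

/-- The number of standard Young tableaux of shape `μ`. -/
noncomputable def fSYT (μ : YoungDiagram) : ℕ := Nat.card (SYT μ)

/-- `ν` is obtained from `μ` by adding a single box (`μ ↗ ν`). -/
def YDcovers (μ ν : YoungDiagram) : Prop := μ.cells ⊆ ν.cells ∧ ν.card = μ.card + 1

/-! Young's lattice is differential. A diagram has exactly one more upper cover than lower covers:
row `i + 1` can take a new cell exactly when a cell can be removed from row `i`, and row `0` can
always take one. Two distinct diagrams `μ`, `κ` of the same size have as many common upper covers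
as common lower covers: each set is empty or the singleton `{μ ⊔ κ}`, resp. `{μ ⊓ κ}`, and
`|μ ⊔ κ| + |μ ⊓ κ| = |μ| + |κ|`.

Removing the largest entry of a standard tableau gives the branching rule
`f^ν = ∑_{μ ⋖ ν} f^μ`. Expanding `∑_{ν ⋗ μ} f^ν` by this rule and exchanging the order of
summation, the two lattice facts turn it into `(|μ| + 1) f^μ`, by induction on `|μ|`.
Hence `∑_{|ν| = n+1} (f^ν)² = ∑_{|μ| = n} f^μ ∑_{ν ⋗ μ} f^ν = (n + 1) ∑_{|μ| = n} (f^μ)²`. -/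

open Finset

section LowerSet

variable {α : Type*} [PartialOrder α] {s : Set α} {a : α}

lemma IsLowerSet.insert_iff (hs : IsLowerSet s) : IsLowerSet (insert a s) ↔ ∀ b < a, b ∈ s := by
  refine ⟨fun h b hb => (h hb.le (Set.mem_insert a s)).resolve_left hb.ne, fun h b c hcb hb => ?_⟩
  rcases hb with rfl | hb
  · exact hcb.eq_or_lt.imp id (h c)
  · exact Or.inr (hs hcb hb)

lemma IsLowerSet.diff_singleton_iff (hs : IsLowerSet s) :
    IsLowerSet (s \ {a}) ↔ ∀ b ∈ s, ¬a < b := by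
  refine ⟨fun h b hb hab => (h hab.le ⟨hb, hab.ne'⟩).2 rfl, fun h => hs.erase fun b hb hab => ?_⟩
  exact (hab.eq_or_lt.resolve_right (h b hb)).symm

end LowerSet

namespace YoungDiagram

variable {μ ν : YoungDiagram}

lemma card_lt_card_of_lt (h : μ < ν) : μ.card < ν.card :=
  Finset.card_lt_card (cells_ssubset_iff.2 h)

lemma eq_of_le_of_card_le (h : μ ≤ ν) (h' : ν.card ≤ μ.card) : μ = ν := by
  by_contra hne
  exact (card_lt_card_of_lt (lt_of_le_of_ne h hne)).not_ge h'

lemma card_sup_add_card_inf (μ ν : YoungDiagram) :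
    (μ ⊔ ν).card + (μ ⊓ ν).card = μ.card + ν.card := by
  simp only [YoungDiagram.card, cells_sup, cells_inf, card_union_add_card_inter]

lemma mul_le_card_of_mem {i j : ℕ} (h : (i, j) ∈ μ) : (i + 1) * (j + 1) ≤ μ.card := by
  have hsub : Iic (i, j) ⊆ μ.cells := fun c hc => μ.isLowerSet (mem_Iic.1 hc) h
  simpa [card_Iic_prod] using card_le_card hsub

lemma finite_setOf_card_eq (n : ℕ) : {μ : YoungDiagram | μ.card = n}.Finite := by
  refine ((Iic (n, n)).powerset.finite_toSet.preimage
    (fun μ _ ν _ h => YoungDiagram.ext h)).subset ?_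
  rintro μ rfl
  rw [Set.mem_preimage, mem_coe, mem_powerset]
  rintro ⟨i, j⟩ hc
  have := mul_le_card_of_mem ((mem_cells _).1 hc)
  rw [mem_Iic, Prod.mk_le_mk]
  constructor <;> nlinarith

noncomputable def withCard (n : ℕ) : Finset YoungDiagram := (finite_setOf_card_eq n).toFinset

@[simp]
lemma mem_withCard {n : ℕ} : μ ∈ withCard n ↔ μ.card = n := by
  simp [withCard]

lemma withCard_zero : withCard 0 = {⊥} := by
  ext μ
  simp [YoungDiagram.card, ← cells_bot, YoungDiagram.ext_iff]

end YoungDiagram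

open YoungDiagram

namespace YDcovers

variable {μ ν κ ρ : YoungDiagram}

lemma le (h : YDcovers μ ν) : μ ≤ ν := cells_subset_iff.1 h.1

lemma exists_cells_eq_insert (h : YDcovers μ ν) : ∃ c ∉ μ, ν.cells = insert c μ.cells := by
  obtain ⟨c, hc⟩ : ∃ c, ν.cells \ μ.cells = {c} := by
    rw [← card_eq_one, card_sdiff_of_subset h.1]
    exact Nat.sub_eq_of_eq_add' h.2
  refine ⟨c, fun hcμ => ?_, ?_⟩
  · simpa [hcμ] using hc.symm.subset (mem_singleton_self c)
  · rw [← sdiff_union_of_subset h.1, hc, singleton_union]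

lemma of_cells_eq_insert {c : ℕ × ℕ} (hc : c ∉ μ) (h : ν.cells = insert c μ.cells) :
    YDcovers μ ν :=
  ⟨h ▸ subset_insert c μ.cells, by
    rw [YoungDiagram.card, YoungDiagram.card, h, card_insert_of_notMem (by simpa using hc)]⟩

lemma eq_of_mem_of_notMem (h : YDcovers μ ν) {x y : ℕ × ℕ}
    (hx : x ∈ ν) (hxμ : x ∉ μ) (hy : y ∈ ν) (hyμ : y ∉ μ) : x = y := by
  obtain ⟨c, -, hν⟩ := h.exists_cells_eq_insert
  rw [← mem_cells, hν, mem_insert, mem_cells] at hx hy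
  exact (hx.resolve_right hxμ).trans (hy.resolve_right hyμ).symm

lemma eq_sup (hμ : YDcovers μ ν) (hκ : YDcovers κ ν) (hne : μ ≠ κ) : ν = μ ⊔ κ := by
  have hlt : μ < μ ⊔ κ := lt_of_le_of_ne le_sup_left fun h =>
    hne (eq_of_le_of_card_le (h ▸ le_sup_right) (by have := hμ.2; have := hκ.2; omega)).symm
  exact (eq_of_le_of_card_le (sup_le hμ.le hκ.le) (hμ.2 ▸ card_lt_card_of_lt hlt)).symm

lemma eq_inf (hμ : YDcovers ρ μ) (hκ : YDcovers ρ κ) (hne : μ ≠ κ) : ρ = μ ⊓ κ := by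
  have hlt : μ ⊓ κ < μ := lt_of_le_of_ne inf_le_left fun h =>
    hne (eq_of_le_of_card_le (h ▸ inf_le_right) (by have := hμ.2; have := hκ.2; omega))
  exact eq_of_le_of_card_le (le_inf hμ.le hκ.le)
    (Nat.le_of_lt_succ (hμ.2 ▸ card_lt_card_of_lt hlt :))

end YDcovers

namespace YoungDiagram

variable {μ ν κ : YoungDiagram}

open Classical in
noncomputable def upperCovers (μ : YoungDiagram) : Finset YoungDiagram :=
  (withCard (μ.card + 1)).filter (YDcovers μ)

open Classical in
noncomputable def lowerCovers (ν : YoungDiagram) : Finset YoungDiagram :=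
  (withCard (ν.card - 1)).filter (YDcovers · ν)

@[simp]
lemma mem_upperCovers : ν ∈ upperCovers μ ↔ YDcovers μ ν := by
  simpa [upperCovers] using fun h : YDcovers μ ν => h.2

@[simp]
lemma mem_lowerCovers : μ ∈ lowerCovers ν ↔ YDcovers μ ν := by
  simpa [lowerCovers] using fun h : YDcovers μ ν => by have := h.2; omega

lemma lowerCovers_eq_empty (hν : ν.card = 0) : lowerCovers ν = ∅ :=
  eq_empty_of_forall_notMem fun μ h => by have := (mem_lowerCovers.1 h).2; omega

open Classical in
theorem card_upperCovers_inter (hne : μ ≠ κ) (hcard : μ.card = κ.card) :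
    #(upperCovers μ ∩ upperCovers κ) = #(lowerCovers μ ∩ lowerCovers κ) := by
  have hsup : upperCovers μ ∩ upperCovers κ =
      if (μ ⊔ κ).card = μ.card + 1 then {μ ⊔ κ} else ∅ := by
    ext ν
    simp only [mem_inter, mem_upperCovers]
    split_ifs with h
    · refine ⟨fun hν => (hν.1.eq_sup hν.2 hne) ▸ mem_singleton_self _, fun hν => ?_⟩
      rw [mem_singleton.1 hν]
      exact ⟨⟨cells_subset_iff.2 le_sup_left, h⟩, ⟨cells_subset_iff.2 le_sup_right, by omega⟩⟩
    · exact ⟨fun hν => absurd (hν.1.eq_sup hν.2 hne ▸ hν.1.2) h,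
        fun hν => absurd hν (notMem_empty _)⟩
  have hinf : lowerCovers μ ∩ lowerCovers κ =
      if (μ ⊓ κ).card + 1 = μ.card then {μ ⊓ κ} else ∅ := by
    ext ρ
    simp only [mem_inter, mem_lowerCovers]
    split_ifs with h
    · refine ⟨fun hρ => (hρ.1.eq_inf hρ.2 hne) ▸ mem_singleton_self _, fun hρ => ?_⟩
      rw [mem_singleton.1 hρ]
      exact ⟨⟨cells_subset_iff.2 inf_le_left, h.symm⟩, ⟨cells_subset_iff.2 inf_le_right, by omega⟩⟩
    · exact ⟨fun hρ => absurd (hρ.1.eq_inf hρ.2 hne ▸ hρ.1.2).symm h,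
        fun hρ => absurd hρ (notMem_empty _)⟩
  have := card_sup_add_card_inf μ κ
  rw [hsup, hinf]
  split_ifs <;> simp_all <;> omega

noncomputable def addableRows (μ : YoungDiagram) : Finset ℕ :=
  (range (μ.colLen 0 + 1)).filter fun i => i = 0 ∨ μ.rowLen i < μ.rowLen (i - 1)

noncomputable def removableRows (μ : YoungDiagram) : Finset ℕ :=
  (range (μ.colLen 0)).filter fun i => μ.rowLen (i + 1) < μ.rowLen i

lemma card_addableRows (μ : YoungDiagram) : #(addableRows μ) = #(removableRows μ) + 1 := by
  rw [addableRows, removableRows, card_filter, card_filter, sum_range_succ']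
  simp

lemma rowLen_pos_iff {i : ℕ} : 0 < μ.rowLen i ↔ i < μ.colLen 0 := by
  rw [← mem_iff_lt_rowLen, mem_iff_lt_colLen]

lemma mem_addableRows {i : ℕ} : i ∈ addableRows μ ↔ i = 0 ∨ μ.rowLen i < μ.rowLen (i - 1) := by
  have := @rowLen_pos_iff μ (i - 1)
  simp only [addableRows, mem_filter, mem_range, and_iff_right_iff_imp]
  omega

lemma mem_removableRows {i : ℕ} : i ∈ removableRows μ ↔ μ.rowLen (i + 1) < μ.rowLen i := by
  have := @rowLen_pos_iff μ i
  simp only [removableRows, mem_filter, mem_range, and_iff_right_iff_imp]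
  omega

lemma isLowerSet_insert_iff_mem_addableRows {i j : ℕ} (hij : (i, j) ∉ μ) :
    IsLowerSet (↑(insert (i, j) μ.cells) : Set (ℕ × ℕ)) ↔ j = μ.rowLen i ∧ i ∈ addableRows μ := by
  rw [coe_insert, μ.isLowerSet.insert_iff, mem_addableRows]
  rw [mem_iff_lt_rowLen, not_lt] at hij
  constructor
  · intro h
    have hrow : 0 < j → j - 1 < μ.rowLen i := fun hj => mem_iff_lt_rowLen.1 <|
      h (i, j - 1) (Prod.lt_iff.2 (Or.inr ⟨le_rfl, Nat.sub_lt hj one_pos⟩))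
    have hcol : 0 < i → j < μ.rowLen (i - 1) := fun hi => mem_iff_lt_rowLen.1 <|
      h (i - 1, j) (Prod.lt_iff.2 (Or.inl ⟨Nat.sub_lt hi one_pos, le_rfl⟩))
    omega
  · rintro ⟨rfl, hi⟩ ⟨i', j'⟩ hlt
    rw [mem_coe, mem_cells, mem_iff_lt_rowLen]
    rcases Prod.lt_iff.1 hlt with ⟨hi', hj'⟩ | ⟨hi', hj'⟩ <;> dsimp only at hi' hj'
    · have := μ.rowLen_anti i' (i - 1) (by omega)
      omega
    · rcases hi'.eq_or_lt with rfl | hi'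
      · exact hj'
      · have := μ.rowLen_anti i' (i - 1) (by omega)
        omega

lemma isLowerSet_erase_iff_mem_removableRows {i j : ℕ} (hij : (i, j) ∈ μ) :
    IsLowerSet (↑(μ.cells.erase (i, j)) : Set (ℕ × ℕ)) ↔
      j + 1 = μ.rowLen i ∧ i ∈ removableRows μ := by
  rw [coe_erase, μ.isLowerSet.diff_singleton_iff, mem_removableRows]
  rw [mem_iff_lt_rowLen] at hij
  constructor
  · intro h
    have hrow : μ.rowLen i ≤ j + 1 := not_lt.1 fun hlt =>
      h (i, j + 1) (mem_iff_lt_rowLen.2 hlt) (Prod.lt_iff.2 (Or.inr ⟨le_rfl, j.lt_succ_self⟩))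
    have hcol : μ.rowLen (i + 1) ≤ j := not_lt.1 fun hlt =>
      h (i + 1, j) (mem_iff_lt_rowLen.2 hlt) (Prod.lt_iff.2 (Or.inl ⟨i.lt_succ_self, le_rfl⟩))
    omega
  · rintro ⟨hj, hi⟩ ⟨i', j'⟩ hb hlt
    rw [mem_coe, mem_cells, mem_iff_lt_rowLen] at hb
    rcases Prod.lt_iff.1 hlt with ⟨hi', hj'⟩ | ⟨hi', hj'⟩ <;> dsimp only at hi' hj'
    · have := μ.rowLen_anti (i + 1) i' hi'
      omega
    · rcases hi'.eq_or_lt with rfl | hi'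
      · omega
      · have := μ.rowLen_anti (i + 1) i' hi'
        omega

lemma card_upperCovers_eq_card_addableRows (μ : YoungDiagram) :
    #(upperCovers μ) = #(addableRows μ) := by
  have hnot (r : ℕ) : (r, μ.rowLen r) ∉ μ := by simp [mem_iff_lt_rowLen]
  symm
  refine card_bij (fun r hr => ⟨insert (r, μ.rowLen r) μ.cells,
      (isLowerSet_insert_iff_mem_addableRows (hnot r)).2 ⟨rfl, hr⟩⟩)
    (fun r _ => mem_upperCovers.2 (YDcovers.of_cells_eq_insert (hnot r) rfl))
    (fun r _ r' _ h => ?_) (fun ν hν => ?_)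
  · have := congrArg YoungDiagram.cells h
    rw [insert_inj (by simpa using hnot r)] at this
    exact congrArg Prod.fst this
  · obtain ⟨⟨i, j⟩, hc, hν⟩ := (mem_upperCovers.1 hν).exists_cells_eq_insert
    have hl := ν.isLowerSet
    rw [hν] at hl
    obtain ⟨rfl, hi⟩ := (isLowerSet_insert_iff_mem_addableRows hc).1 hl
    exact ⟨i, hi, YoungDiagram.ext hν.symm⟩

lemma card_lowerCovers_eq_card_removableRows (μ : YoungDiagram) :
    #(lowerCovers μ) = #(removableRows μ) := by
  have hmem {r : ℕ} (hr : r ∈ removableRows μ) : (r, μ.rowLen r - 1) ∈ μ := by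
    rw [mem_removableRows] at hr
    rw [mem_iff_lt_rowLen]
    omega
  symm
  refine card_bij (fun r hr => ⟨μ.cells.erase (r, μ.rowLen r - 1),
      (isLowerSet_erase_iff_mem_removableRows (hmem hr)).2
        ⟨by rw [mem_removableRows] at hr; omega, hr⟩⟩)
    (fun r hr => mem_lowerCovers.2 (YDcovers.of_cells_eq_insert (by simp)
      (insert_erase ((mem_cells _).2 (hmem hr))).symm))
    (fun r hr r' _ h => ?_) (fun ρ hρ => ?_)
  · have := congrArg YoungDiagram.cells h
    rw [erase_inj _ ((mem_cells _).2 (hmem hr))] at this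
    exact congrArg Prod.fst this
  · obtain ⟨⟨i, j⟩, hc, hμ⟩ := (mem_lowerCovers.1 hρ).exists_cells_eq_insert
    have hρ' : ρ.cells = μ.cells.erase (i, j) := by rw [hμ, erase_insert (by simpa using hc)]
    have hl := ρ.isLowerSet
    rw [hρ'] at hl
    obtain ⟨hj, hi⟩ := (isLowerSet_erase_iff_mem_removableRows (by simp [← mem_cells, hμ])).1 hl
    obtain rfl : j = μ.rowLen i - 1 := by omega
    exact ⟨i, hi, YoungDiagram.ext hρ'.symm⟩

theorem card_upperCovers (μ : YoungDiagram) : #(upperCovers μ) = #(lowerCovers μ) + 1 := by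
  rw [card_upperCovers_eq_card_addableRows, card_lowerCovers_eq_card_removableRows,
    card_addableRows]

end YoungDiagram

namespace SYT

variable {μ ν : YoungDiagram}

lemma ext {T S : SYT μ} (h : ∀ i j, T.entry i j = S.entry i j) : T = S := by
  cases T; cases S; simp only [mk.injEq]; funext i j; exact h i j

lemma entry_eq_zero (T : SYT μ) {i j : ℕ} (h : (i, j) ∉ μ) : T.entry i j = 0 := by
  simpa using (T.mem_iff i j).not.1 h

instance : Finite (SYT μ) :=
  Finite.of_injective (fun T (c : μ.cells) =>
      (⟨T.entry c.1.1 c.1.2, Nat.lt_succ_of_le (T.le_card _ _)⟩ : Fin (μ.card + 1)))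
    fun T S h => ext fun i j => by
      by_cases hij : (i, j) ∈ μ
      · simpa using congrArg Fin.val (congrFun h ⟨(i, j), hij⟩)
      · rw [entry_eq_zero T hij, entry_eq_zero S hij]

instance : Unique (SYT ⊥) where
  default :=
    { entry := fun _ _ => 0
      mem_iff := by simp [YoungDiagram.notMem_bot]
      le_card := by simp
      injOn := by simp [YoungDiagram.notMem_bot]
      row_lt := by simp [YoungDiagram.notMem_bot]
      col_lt := by simp [YoungDiagram.notMem_bot] }
  uniq T := ext fun i j => T.entry_eq_zero (YoungDiagram.notMem_bot _)

lemma exists_entry_eq_card (T : SYT ν) (hν : 0 < ν.card) : ∃ c ∈ ν, T.entry c.1 c.2 = ν.card := by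
  have hsurj := surj_on_of_inj_on_of_card_le (s := ν.cells) (t := Icc 1 ν.card)
    (fun c _ => T.entry c.1 c.2)
    (fun c hc => mem_Icc.2 ⟨(T.mem_iff _ _).1 ((mem_cells _).1 hc), T.le_card _ _⟩)
    (fun c c' hc hc' h => T.injOn _ _ _ _ ((mem_cells _).1 hc) ((mem_cells _).1 hc') h)
    (by simp)
  obtain ⟨c, hc, h⟩ := hsurj ν.card (mem_Icc.2 ⟨hν, le_rfl⟩)
  exact ⟨c, (mem_cells _).1 hc, h.symm⟩

lemma eq_of_entry_eq_card (T : SYT ν) {a b : ℕ × ℕ} (hb : b ∈ ν) (hab : a ≤ b)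
    (ha : T.entry a.1 a.2 = ν.card) : a = b := by
  by_contra hne
  rcases Prod.lt_iff.1 (lt_of_le_of_ne hab hne) with ⟨h1, h2⟩ | ⟨h1, h2⟩
  · have := T.col_lt a.1 a.2 (ν.up_left_mem h1 h2 hb)
    have := T.le_card (a.1 + 1) a.2
    omega
  · have := T.row_lt a.1 a.2 (ν.up_left_mem h1 h2 hb)
    have := T.le_card a.1 (a.2 + 1)
    omega

def eraseMaxShape (T : SYT ν) : YoungDiagram where
  cells := ν.cells.filter fun c => T.entry c.1 c.2 ≠ ν.card
  isLowerSet a b hba ha := by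
    rw [coe_filter] at ha ⊢
    exact ⟨ν.isLowerSet hba ha.1, fun h => ha.2 (T.eq_of_entry_eq_card ha.1 hba h ▸ h)⟩

lemma mem_eraseMaxShape {T : SYT ν} {c : ℕ × ℕ} :
    c ∈ T.eraseMaxShape ↔ c ∈ ν ∧ T.entry c.1 c.2 ≠ ν.card := by
  rw [← mem_cells]
  exact mem_filter

lemma yDcovers_eraseMaxShape (T : SYT ν) (hν : 0 < ν.card) : YDcovers T.eraseMaxShape ν := by
  obtain ⟨c, hc, hmax⟩ := T.exists_entry_eq_card hν
  refine YDcovers.of_cells_eq_insert (fun h => (mem_eraseMaxShape.1 h).2 hmax)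
    (Finset.ext fun x => ?_)
  rw [mem_insert, mem_cells, mem_cells, mem_eraseMaxShape]
  constructor
  · intro hx
    by_cases h : T.entry x.1 x.2 = ν.card
    · exact Or.inl (T.injOn _ _ _ _ hx hc (h.trans hmax.symm))
    · exact Or.inr ⟨hx, h⟩
  · rintro (rfl | hx)
    exacts [hc, hx.1]

def eraseMax (T : SYT ν) : SYT T.eraseMaxShape where
  entry i j := if T.entry i j = ν.card then 0 else T.entry i j
  mem_iff i j := by
    rw [mem_eraseMaxShape]
    split_ifs with h
    · simp [h]
    · simp [h, T.mem_iff]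
  le_card i j := by
    split_ifs with h
    · exact Nat.zero_le _
    · rcases Nat.eq_zero_or_pos ν.card with h0 | hν
      · have := T.le_card i j
        omega
      · have := (T.yDcovers_eraseMaxShape hν).2
        have := T.le_card i j
        omega
  injOn i j i' j' hij hij' he := by
    rw [mem_eraseMaxShape] at hij hij'
    simp only [if_neg hij.2, if_neg hij'.2] at he
    exact T.injOn i j i' j' hij.1 hij'.1 he
  row_lt i j h := by
    have h' := mem_eraseMaxShape.1 (T.eraseMaxShape.up_left_mem le_rfl (Nat.le_succ j) h)
    rw [mem_eraseMaxShape] at h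
    simp only [if_neg h.2, if_neg h'.2]
    exact T.row_lt i j h.1
  col_lt i j h := by
    have h' := mem_eraseMaxShape.1 (T.eraseMaxShape.up_left_mem (Nat.le_succ i) le_rfl h)
    rw [mem_eraseMaxShape] at h
    simp only [if_neg h.2, if_neg h'.2]
    exact T.col_lt i j h.1

def extend (h : YDcovers μ ν) (S : SYT μ) : SYT ν where
  entry i j := if (i, j) ∈ μ then S.entry i j else if (i, j) ∈ ν then ν.card else 0
  mem_iff i j := by
    have := h.2
    split_ifs with hμ hν
    · exact iff_of_true (h.le hμ) ((S.mem_iff i j).1 hμ)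
    · exact iff_of_true hν (by omega)
    · exact iff_of_false hν (by omega)
  le_card i j := by
    have := h.2
    have := S.le_card i j
    split_ifs <;> omega
  injOn i j i' j' hij hij' he := by
    have := h.2
    have := S.le_card i j
    have := S.le_card i' j'
    split_ifs at he with hμ hμ' hμ'
    · exact S.injOn i j i' j' hμ hμ' he
    · omega
    · omega
    · exact h.eq_of_mem_of_notMem hij hμ hij' hμ'
  row_lt i j hν := by
    have hν' := ν.up_left_mem le_rfl (Nat.le_succ j) hν
    by_cases hμ : (i, j + 1) ∈ μ
    · have hμ' := μ.up_left_mem le_rfl (Nat.le_succ j) hμ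
      simp only [if_pos hμ, if_pos hμ']
      exact S.row_lt i j hμ
    · have hμ' : (i, j) ∈ μ := by_contra fun hμ' => by
        simpa using h.eq_of_mem_of_notMem hν' hμ' hν hμ
      simp only [if_pos hμ', if_neg hμ, if_pos hν]
      have := S.le_card i j
      have := h.2
      omega
  col_lt i j hν := by
    have hν' := ν.up_left_mem (Nat.le_succ i) le_rfl hν
    by_cases hμ : (i + 1, j) ∈ μ
    · have hμ' := μ.up_left_mem (Nat.le_succ i) le_rfl hμ
      simp only [if_pos hμ, if_pos hμ']
      exact S.col_lt i j hμ
    · have hμ' : (i, j) ∈ μ := by_contra fun hμ' => by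
        simpa using h.eq_of_mem_of_notMem hν' hμ' hν hμ
      simp only [if_pos hμ', if_neg hμ, if_pos hν]
      have := S.le_card i j
      have := h.2
      omega

lemma extend_entry_of_mem (h : YDcovers μ ν) (S : SYT μ) {i j : ℕ} (hij : (i, j) ∈ μ) :
    (S.extend h).entry i j = S.entry i j :=
  if_pos hij

lemma eraseMaxShape_extend (h : YDcovers μ ν) (S : SYT μ) : (S.extend h).eraseMaxShape = μ := by
  refine YoungDiagram.ext (Finset.ext fun ⟨i, j⟩ => ?_)
  rw [mem_cells, mem_cells, mem_eraseMaxShape]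
  by_cases hij : (i, j) ∈ μ
  · have := S.le_card i j
    have := h.2
    rw [extend_entry_of_mem h S hij]
    exact iff_of_true ⟨h.le hij, by omega⟩ hij
  · exact iff_of_false (fun ⟨hν, hne⟩ => hne (by simp [extend, hij, hν])) hij

lemma extend_injective (h : YDcovers μ ν) : Function.Injective (extend h) :=
  fun S S' hS => ext fun i j => by
    by_cases hij : (i, j) ∈ μ
    · rw [← extend_entry_of_mem h S hij, ← extend_entry_of_mem h S' hij, hS]
    · rw [S.entry_eq_zero hij, S'.entry_eq_zero hij]

lemma extend_eraseMax (T : SYT ν) (hν : 0 < ν.card) :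
    T.eraseMax.extend (T.yDcovers_eraseMaxShape hν) = T :=
  ext fun i j => by
    simp only [extend, eraseMax, mem_eraseMaxShape]
    split_ifs with h₁ h₂ hij
    · exact absurd h₂ h₁.2
    · rfl
    · exact (not_and_not_right.1 h₁ hij).symm
    · exact (T.entry_eq_zero hij).symm

end SYT

lemma fSYT_bot : fSYT ⊥ = 1 := Nat.card_unique

theorem fSYT_eq_sum_lowerCovers {ν : YoungDiagram} (hν : 0 < ν.card) :
    fSYT ν = ∑ μ ∈ lowerCovers ν, fSYT μ := by
  let F : (Σ μ : lowerCovers ν, SYT μ.1) → SYT ν := fun p => p.2.extend (mem_lowerCovers.1 p.1.2)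
  have hF : F.Bijective := by
    refine ⟨?_, fun T => ⟨⟨⟨_, mem_lowerCovers.2 (T.yDcovers_eraseMaxShape hν)⟩, T.eraseMax⟩,
      T.extend_eraseMax hν⟩⟩
    rintro ⟨⟨μ, hμ⟩, S⟩ ⟨⟨μ', hμ'⟩, S'⟩ hSS'
    have hshape := congrArg SYT.eraseMaxShape hSS'
    simp only [F, SYT.eraseMaxShape_extend] at hshape
    subst hshape
    obtain rfl := SYT.extend_injective _ hSS'
    rfl
  rw [fSYT, ← Nat.card_congr (Equiv.ofBijective F hF), Nat.card_sigma]
  exact sum_coe_sort (lowerCovers ν) fSYT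

open Classical in
theorem sum_upperCovers_fSYT_eq (μ : YoungDiagram) :
    ∑ ν ∈ upperCovers μ, fSYT ν =
      #(upperCovers μ) * fSYT μ + ∑ ρ ∈ lowerCovers μ, ∑ κ ∈ (upperCovers ρ).erase μ, fSYT κ := by
  calc ∑ ν ∈ upperCovers μ, fSYT ν
      = ∑ ν ∈ upperCovers μ, ∑ κ ∈ lowerCovers ν, fSYT κ :=
        sum_congr rfl fun ν hν =>
          fSYT_eq_sum_lowerCovers (by rw [(mem_upperCovers.1 hν).2]; omega)
    _ = ∑ κ ∈ withCard μ.card, ∑ _ν ∈ upperCovers μ ∩ upperCovers κ, fSYT κ := by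
        refine sum_comm' fun ν κ => ?_
        simp only [mem_upperCovers, mem_lowerCovers, mem_inter, mem_withCard]
        exact ⟨fun h => ⟨h, by have := h.1.2; have := h.2.2; omega⟩, And.left⟩
    _ = #(upperCovers μ) * fSYT μ +
          ∑ κ ∈ (withCard μ.card).erase μ, #(lowerCovers μ ∩ lowerCovers κ) * fSYT κ := by
        rw [← add_sum_erase _ _ (mem_withCard.2 rfl), inter_self]
        simp only [sum_const, smul_eq_mul]
        refine congrArg _ (sum_congr rfl fun κ hκ => ?_)
        rw [card_upperCovers_inter (ne_of_mem_erase hκ).symm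
          (mem_withCard.1 (mem_of_mem_erase hκ)).symm]
    _ = _ := by
        congr 1
        simp only [← smul_eq_mul, ← sum_const]
        refine sum_comm' fun κ ρ => ?_
        simp only [mem_upperCovers, mem_lowerCovers, mem_inter, mem_withCard, mem_erase]
        exact ⟨fun ⟨⟨hne, _⟩, hμ, hκ⟩ => ⟨⟨hne, hκ⟩, hμ⟩,
          fun ⟨⟨hne, hκ⟩, hμ⟩ => ⟨⟨hne, by have := hμ.2; have := hκ.2; omega⟩, hμ, hκ⟩⟩

open Classical in
theorem sum_upperCovers_fSYT (μ : YoungDiagram) :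
    ∑ ν ∈ upperCovers μ, fSYT ν = (μ.card + 1) * fSYT μ := by
  induction hn : μ.card using Nat.strong_induction_on generalizing μ with
  | _ n ih =>
  have hdown : ∑ ρ ∈ lowerCovers μ, ∑ κ ∈ (upperCovers ρ).erase μ, fSYT κ +
      #(lowerCovers μ) * fSYT μ = n * fSYT μ := by
    rcases Nat.eq_zero_or_pos n with rfl | hpos
    · simp [lowerCovers_eq_empty hn]
    · calc _ = ∑ ρ ∈ lowerCovers μ, (∑ κ ∈ (upperCovers ρ).erase μ, fSYT κ + fSYT μ) := by
              rw [sum_add_distrib, sum_const, smul_eq_mul]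
        _ = ∑ ρ ∈ lowerCovers μ, n * fSYT ρ := sum_congr rfl fun ρ hρ => by
              have hρ := mem_lowerCovers.1 hρ
              have hcard : ρ.card + 1 = n := hn ▸ hρ.2.symm
              rw [sum_erase_add _ _ (mem_upperCovers.2 hρ), ih ρ.card (by omega) ρ rfl, hcard]
        _ = n * fSYT μ := by rw [← mul_sum, ← fSYT_eq_sum_lowerCovers (hn ▸ hpos)]
  rw [sum_upperCovers_fSYT_eq, card_upperCovers]
  linarith

theorem sum_withCard_succ_fSYT_sq (n : ℕ) :
    ∑ ν ∈ withCard (n + 1), fSYT ν ^ 2 = (n + 1) * ∑ μ ∈ withCard n, fSYT μ ^ 2 := by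
  calc ∑ ν ∈ withCard (n + 1), fSYT ν ^ 2
      = ∑ ν ∈ withCard (n + 1), ∑ μ ∈ lowerCovers ν, fSYT μ * fSYT ν := by
        refine sum_congr rfl fun ν hν => ?_
        rw [← sum_mul, ← fSYT_eq_sum_lowerCovers (by rw [mem_withCard.1 hν]; omega), sq]
    _ = ∑ μ ∈ withCard n, fSYT μ * ∑ ν ∈ upperCovers μ, fSYT ν := by
        simp only [mul_sum]
        refine sum_comm' fun ν μ => ?_
        simp only [mem_withCard, mem_lowerCovers, mem_upperCovers]
        exact ⟨fun ⟨hν, h⟩ => ⟨h, by have := h.2; omega⟩, fun ⟨h, hμ⟩ => ⟨by rw [h.2, hμ], h⟩⟩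
    _ = (n + 1) * ∑ μ ∈ withCard n, fSYT μ ^ 2 := by
        rw [mul_sum]
        refine sum_congr rfl fun μ hμ => ?_
        rw [sum_upperCovers_fSYT, mem_withCard.1 hμ]
        ring

theorem sum_withCard_fSYT_sq (n : ℕ) : ∑ μ ∈ withCard n, fSYT μ ^ 2 = n ! := by
  induction n with
  | zero => simp [withCard_zero, fSYT_bot]
  | succ n ih => rw [sum_withCard_succ_fSYT_sq, ih, factorial_succ]

theorem sum_fSYT_sq_general (n : ℕ) :
    ∑ᶠ (lam : YoungDiagram) (_ : lam.card = n), (fSYT lam) ^ 2 = n ! := by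
  rw [← sum_withCard_fSYT_sq, ← finsum_mem_coe_finset]
  simp

/-- $Σ_{λ ⊢ n} (f^λ)^2 = n!$. -/
theorem sum_fSYT_sq (n : ℕ) (hn : 1 ≤ n) :
    ∑ᶠ (lam : YoungDiagram) (_ : lam.card = n), (fSYT lam) ^ 2 = n ! :=
  sum_fSYT_sq_general n
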